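/- For every natural number n, the triangulated grid H_n has a strict 3-queue layout, i.e. sqn(H_n) ≤ 3. In particular, the linear order on {1,…,n}² that lists vertices (x,y) by increasing y and, within each fixed y, by increasing x, together with the assignment placing all horizontal edges (x,y)(x+1,y) in one queue, all vertical edges (x,y)(x,y+1) in a second queue, and all diagonal edges (x,y)(x+1,y+1) in a third queue, is a strict 3-queue layout of H_n. -/

import Mathlib

open SimpleGraph

/-- Two (unordered) pairs of vertices cross with respect to the strict order `lt`:
with `e = {v,w}`, `f = {x,y}`, `v ≺ w`, `x ≺ y`, they cross if
`v ≺ x ≺ w ≺ y` or `x ≺ v ≺ y ≺ w`. -/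
def Cross {V : Type*} (lt : V → V → Prop) (e f : Sym2 V) : Prop :=
  ∃ v w x y : V, e = s(v, w) ∧ f = s(x, y) ∧
    ((lt v x ∧ lt x w ∧ lt w y) ∨ (lt x v ∧ lt v y ∧ lt y w))

/-- Two (unordered) pairs of vertices nest with respect to the strict order `lt`:
with `e = {v,w}`, `f = {x,y}`, `v ≺ w`, `x ≺ y`, they nest if
`v ≺ x ≺ y ≺ w` or `x ≺ v ≺ w ≺ y`. -/
def Nest {V : Type*} (lt : V → V → Prop) (e f : Sym2 V) : Prop :=
  ∃ v w x y : V, e = s(v, w) ∧ f = s(x, y) ∧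
    ((lt v x ∧ lt x y ∧ lt y w) ∨ (lt x v ∧ lt v w ∧ lt w y))

/-- `(lt, φ)` is a `k`-stack layout of `G`: `lt` is a linear (strict total) order on the
vertices and no two edges with the same colour cross. -/
def IsStackLayout {V : Type*} {k : ℕ} (G : SimpleGraph V)
    (lt : V → V → Prop) (φ : Sym2 V → Fin k) : Prop :=
  IsStrictTotalOrder V lt ∧
    ∀ e ∈ G.edgeSet, ∀ f ∈ G.edgeSet, φ e = φ f → ¬ Cross lt e f

/-- `(lt, φ)` is a `k`-queue layout of `G`: `lt` is a linear (strict total) order on the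
vertices and no two edges with the same colour nest. -/
def IsQueueLayout {V : Type*} {k : ℕ} (G : SimpleGraph V)
    (lt : V → V → Prop) (φ : Sym2 V → Fin k) : Prop :=
  IsStrictTotalOrder V lt ∧
    ∀ e ∈ G.edgeSet, ∀ f ∈ G.edgeSet, φ e = φ f → ¬ Nest lt e f

/-- The stack-number of `G`: the least `k` such that `G` has a `k`-stack layout. -/
noncomputable def stackNumber {V : Type*} (G : SimpleGraph V) : ℕ :=
  sInf {k | ∃ (lt : V → V → Prop) (φ : Sym2 V → Fin k), IsStackLayout G lt φ}

/-- The queue-number of `G`: the least `k` such that `G` has a `k`-queue layout. -/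
noncomputable def queueNumber {V : Type*} (G : SimpleGraph V) : ℕ :=
  sInf {k | ∃ (lt : V → V → Prop) (φ : Sym2 V → Fin k), IsQueueLayout G lt φ}

/-- A queue layout is strict if for every vertex `u` and neighbours `v, w` of `u` with
`u ≺ v ≺ w` or `v ≺ w ≺ u`, the edges `uv` and `uw` get different colours. -/
def IsStrictQueueLayout {V : Type*} {k : ℕ} (G : SimpleGraph V)
    (lt : V → V → Prop) (φ : Sym2 V → Fin k) : Prop :=
  IsQueueLayout G lt φ ∧
    ∀ u v w : V, G.Adj u v → G.Adj u w →
      ((lt u v ∧ lt v w) ∨ (lt v w ∧ lt w u)) → φ s(u, v) ≠ φ s(u, w)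

/-- The strict queue-number of `G`. -/
noncomputable def strictQueueNumber {V : Type*} (G : SimpleGraph V) : ℕ :=
  sInf {k | ∃ (lt : V → V → Prop) (φ : Sym2 V → Fin k), IsStrictQueueLayout G lt φ}

/-- A stack layout is dispersable if the colouring is a proper edge-colouring. -/
def IsDispersableStackLayout {V : Type*} {k : ℕ} (G : SimpleGraph V)
    (lt : V → V → Prop) (φ : Sym2 V → Fin k) : Prop :=
  IsStackLayout G lt φ ∧
    ∀ u v w : V, G.Adj u v → G.Adj u w → v ≠ w → φ s(u, v) ≠ φ s(u, w)

/-- The dispersable stack-number of `G`. -/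
noncomputable def dispersableStackNumber {V : Type*} (G : SimpleGraph V) : ℕ :=
  sInf {k | ∃ (lt : V → V → Prop) (φ : Sym2 V → Fin k), IsDispersableStackLayout G lt φ}

/-- The star `S_b` with root `none` and leaves `some i`, `i : Fin b`. -/
def starGraph (b : ℕ) : SimpleGraph (Option (Fin b)) :=
  SimpleGraph.fromRel (fun v w => v = none ∧ w ≠ none)

/-- The triangulated grid `H_n` on vertex set `Fin n × Fin n` (0-indexed), with horizontal
edges `(x,y)(x+1,y)`, vertical edges `(x,y)(x,y+1)` and diagonal edges `(x,y)(x+1,y+1)`. -/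
def triGrid (n : ℕ) : SimpleGraph (Fin n × Fin n) :=
  SimpleGraph.fromRel (fun p q =>
    ((p.1 : ℕ) + 1 = (q.1 : ℕ) ∧ p.2 = q.2) ∨
    (p.1 = q.1 ∧ (p.2 : ℕ) + 1 = (q.2 : ℕ)) ∨
    ((p.1 : ℕ) + 1 = (q.1 : ℕ) ∧ (p.2 : ℕ) + 1 = (q.2 : ℕ)))

/-- The row-by-row order on `{1,…,n}²`: `(x,y)` before `(x',y')` iff `y < y'`, or
`y = y'` and `x < x'`. -/
def rowOrder (n : ℕ) (p q : Fin n × Fin n) : Prop :=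
  (p.2 : ℕ) < (q.2 : ℕ) ∨ (p.2 = q.2 ∧ (p.1 : ℕ) < (q.1 : ℕ))

/-
Number the vertices of `H_n` row by row, `(x, y) ↦ y n + x`; the row-by-row order is the
order of these numbers. Every horizontal, vertical and diagonal edge then joins two numbers at
distance `1`, `n` and `n + 1` respectively. If all edges of a queue have the same length, no two
of them nest, since a nested edge is strictly shorter, and no two of them leave a vertex on the
same side, since their other endpoints would coincide.
-/

open Function

section ConstantLength

variable {V : Type*} {k : ℕ} {G : SimpleGraph V} {f : V → ℕ} {φ : Sym2 V → Fin k}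

theorem isQueueLayout_of_dist_eq (hf : Injective f) (len : Fin k → ℕ)
    (hlen : ∀ p q, G.Adj p q → Nat.dist (f p) (f q) = len (φ s(p, q))) :
    IsQueueLayout G ((· < ·) on f) φ := by
  refine ⟨hf.isStrictTotalOrder_onFun _, ?_⟩
  rintro _ he _ hf' hφ ⟨v, w, x, y, rfl, rfl, hnest⟩
  have hvw := hlen v w he
  have hxy := hlen x y hf'
  rw [hφ, ← hxy] at hvw
  simp only [onFun, Nat.dist] at hnest hvw
  omega

theorem isStrictQueueLayout_of_dist_eq (hf : Injective f) (len : Fin k → ℕ)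
    (hlen : ∀ p q, G.Adj p q → Nat.dist (f p) (f q) = len (φ s(p, q))) :
    IsStrictQueueLayout G ((· < ·) on f) φ := by
  refine ⟨isQueueLayout_of_dist_eq hf len hlen, fun u v w huv huw hsame hφ => ?_⟩
  have huv' := hlen u v huv
  rw [hφ, ← hlen u w huw] at huv'
  simp only [onFun, Nat.dist] at hsame huv'
  omega

end ConstantLength

section RowOrder

variable {n : ℕ}

def rowIndex (n : ℕ) (p : Fin n × Fin n) : ℕ := p.2 * n + p.1

theorem rowOrder_eq_onFun : rowOrder n = ((· < ·) on rowIndex n) := by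
  ext ⟨⟨a, ha⟩, ⟨b, hb⟩⟩ ⟨⟨c, hc⟩, ⟨d, hd⟩⟩
  simp only [rowIndex, rowOrder, onFun, Fin.mk.injEq]
  constructor
  · rintro (hbd | ⟨rfl, hac⟩)
    · nlinarith
    · omega
  · intro h
    rcases lt_trichotomy b d with hbd | rfl | hbd
    · exact .inl hbd
    · exact .inr ⟨rfl, by omega⟩
    · nlinarith

theorem rowIndex_injective : Injective (rowIndex n) := by
  have h : rowIndex n = fun p => (finProdFinEquiv p.swap : ℕ) := by
    ext p
    simp only [rowIndex, finProdFinEquiv, Equiv.coe_fn_mk, Prod.fst_swap, Prod.snd_swap]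
    ring
  rw [h]
  exact Fin.val_injective.comp (finProdFinEquiv.injective.comp Prod.swap_injective)

theorem dist_rowIndex_of_triGrid_adj {φ : Sym2 (Fin n × Fin n) → Fin 3}
    (hH : ∀ p q : Fin n × Fin n, (p.1 : ℕ) + 1 = (q.1 : ℕ) → p.2 = q.2 → φ s(p, q) = 0)
    (hV : ∀ p q : Fin n × Fin n, p.1 = q.1 → (p.2 : ℕ) + 1 = (q.2 : ℕ) → φ s(p, q) = 1)
    (hD : ∀ p q : Fin n × Fin n, (p.1 : ℕ) + 1 = (q.1 : ℕ) → (p.2 : ℕ) + 1 = (q.2 : ℕ) →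
      φ s(p, q) = 2)
    {p q : Fin n × Fin n} (hpq : (triGrid n).Adj p q) :
    Nat.dist (rowIndex n p) (rowIndex n q) = ![1, n, n + 1] (φ s(p, q)) := by
  have hstep : ∀ p q : Fin n × Fin n, ((p.1 : ℕ) + 1 = (q.1 : ℕ) ∧ p.2 = q.2) ∨
      (p.1 = q.1 ∧ (p.2 : ℕ) + 1 = (q.2 : ℕ)) ∨
      ((p.1 : ℕ) + 1 = (q.1 : ℕ) ∧ (p.2 : ℕ) + 1 = (q.2 : ℕ)) →
      rowIndex n q = rowIndex n p + ![1, n, n + 1] (φ s(p, q)) := by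
    rintro p q (⟨h1, h2⟩ | ⟨h1, h2⟩ | ⟨h1, h2⟩) <;> simp only [rowIndex]
    · rw [hH p q h1 h2, h2, Matrix.cons_val_zero]
      omega
    · rw [hV p q h1 h2, h1, ← h2, Matrix.cons_val_one, Matrix.cons_val_zero]
      ring
    · rw [hD p q h1 h2, ← h2, Matrix.cons_val_two, Matrix.tail_cons, Matrix.head_cons, ← h1]
      ring
  obtain ⟨-, hpq | hqp⟩ := hpq
  · rw [hstep p q hpq, Nat.dist_eq_sub_of_le (Nat.le_add_right _ _), Nat.add_sub_cancel_left]
  · rw [hstep q p hqp, Nat.dist_eq_sub_of_le_right (Nat.le_add_right _ _),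
      Nat.add_sub_cancel_left, Sym2.eq_swap]

end RowOrder

/-- the row-by-row order together with any assignment placing horizontal
edges in queue `0`, vertical edges in queue `1` and diagonal edges in queue `2` is a
strict 3-queue layout of `H_n`; in particular `sqn(H_n) ≤ 3`. -/
theorem stmt3 (n : ℕ) (φ : Sym2 (Fin n × Fin n) → Fin 3)
    (hH : ∀ p q : Fin n × Fin n, (p.1 : ℕ) + 1 = (q.1 : ℕ) → p.2 = q.2 → φ s(p, q) = 0)
    (hV : ∀ p q : Fin n × Fin n, p.1 = q.1 → (p.2 : ℕ) + 1 = (q.2 : ℕ) → φ s(p, q) = 1)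
    (hD : ∀ p q : Fin n × Fin n, (p.1 : ℕ) + 1 = (q.1 : ℕ) → (p.2 : ℕ) + 1 = (q.2 : ℕ) →
      φ s(p, q) = 2) :
    IsStrictQueueLayout (triGrid n) (rowOrder n) φ ∧ strictQueueNumber (triGrid n) ≤ 3 := by
  have hlayout : IsStrictQueueLayout (triGrid n) (rowOrder n) φ :=
    rowOrder_eq_onFun ▸ isStrictQueueLayout_of_dist_eq rowIndex_injective _
      fun _ _ => dist_rowIndex_of_triGrid_adj hH hV hD
  exact ⟨hlayout, Nat.sInf_le ⟨rowOrder n, φ, hlayout⟩⟩
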